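/- For degree-zero elements x, y of a complete free Lie algebra and any rational r, one has r(x*y)*x = x*r(y*x) and r(y*x)*(-x) = (-x)*r(x*y). -/

import Mathlib

/-- Abstract setting for a complete (free) differential graded Lie algebra over `ℚ`,
together with its completed universal enveloping algebra, exponential, the
Baker–Campbell–Hausdorff product `bch x y = log (exp x * exp y)`, the operators
`e^{ad_x}` and `(e^{ad_x}-1)/ad_x`, the bracket-length projections `proj n` and
the bracket-length filtration `F n` (elements of bracket length `≥ n`). -/
structure CFL where
  L : Type
  [lieRing : LieRing L]
  [lieAlg : LieAlgebra ℚ L]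
  /-- homogeneous component of (homological) degree `n` -/
  deg : ℤ → Submodule ℚ L
  deg_bracket : ∀ {m n : ℤ} {a b : L}, a ∈ deg m → b ∈ deg n → ⁅a, b⁆ ∈ deg (m + n)
  /-- projection onto the component of bracket length `n` -/
  proj : ℕ → (L →ₗ[ℚ] L)
  proj_zero : ∀ a : L, proj 0 a = 0
  proj_ne : ∀ {m n : ℕ}, m ≠ n → ∀ a : L, proj m (proj n a) = 0
  proj_idem : ∀ (n : ℕ) (a : L), proj n (proj n a) = proj n a
  /-- the bracket-length decomposition separates points -/
  sep : ∀ a : L, (∀ n, proj n a = 0) → a = 0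
  /-- `F n` = elements of bracket length `≥ n` -/
  F : ℕ → Submodule ℚ L
  mem_F : ∀ (n : ℕ) (a : L), a ∈ F n ↔ ∀ m < n, proj m a = 0
  /-- the completed universal enveloping algebra -/
  A : Type
  [ringA : Ring A]
  [algA : Algebra ℚ A]
  ι : L →ₗ[ℚ] A
  ι_inj : Function.Injective ι
  ι_bracket : ∀ a b : L, ι ⁅a, b⁆ = ι a * ι b - ι b * ι a
  /-- the exponential of the completed enveloping algebra -/
  exp : A → A
  exp_zero : exp 0 = 1
  exp_inj : ∀ a b : L, exp (ι a) = exp (ι b) → a = b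
  /-- one-parameter group property of `exp` -/
  exp_add_smul : ∀ (a : L) (r s : ℚ), exp (ι ((r + s) • a)) = exp (ι (r • a)) * exp (ι (s • a))
  /-- the Baker–Campbell–Hausdorff product, `bch a b = log (exp a * exp b)` -/
  bch : L → L → L
  exp_bch : ∀ a b : L, exp (ι (bch a b)) = exp (ι a) * exp (ι b)
  /-- `e^{ad_a}` -/
  expAd : L → (L →ₗ[ℚ] L)
  /-- `e^{ad_a}` is conjugation by `exp a` in the enveloping algebra -/
  expAd_conj : ∀ a z : L, ι (expAd a z) * exp (ι a) = exp (ι a) * ι z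
  /-- the operator `(e^{ad_a}-1)/ad_a` -/
  expAdInt : L → (L →ₗ[ℚ] L)
  expAdInt_spec : ∀ a z : L, ⁅a, expAdInt a z⁆ + z = expAd a z
  /-- exponential of endomorphisms (e.g. of `ad` operators) -/
  expE : Module.End ℚ L → Module.End ℚ L
  /-- BCH product of endomorphisms, `bchE f g = log (expE f ∘ expE g)` -/
  bchE : Module.End ℚ L → Module.End ℚ L → Module.End ℚ L
  expE_bchE : ∀ f g : Module.End ℚ L, expE (bchE f g) = expE f ∘ₗ expE g
  expE_ad : ∀ a : L, expE (LieAlgebra.ad ℚ L a) = expAd a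
  /-- the differential -/
  d : L →ₗ[ℚ] L
  d_sq : ∀ a : L, d (d a) = 0
  d_deg : ∀ {n : ℤ} {a : L}, a ∈ deg n → d a ∈ deg (n - 1)
  d_filt : ∀ {n : ℕ} {a : L}, a ∈ F n → d a ∈ F n
  d_leibniz : ∀ {n : ℤ} (a b : L), a ∈ deg n →
    d ⁅a, b⁆ = ⁅d a, b⁆ + ((-1 : ℚ) ^ n) • ⁅a, d b⁆

attribute [instance] CFL.lieRing CFL.lieAlg CFL.ringA CFL.algA

namespace CFL

variable (C : CFL)

/-- Maurer–Cartan elements: degree `-1` and `da + ½[a,a] = 0`. -/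
def IsMC (a : C.L) : Prop := a ∈ C.deg (-1) ∧ C.d a + (2 : ℚ)⁻¹ • ⁅a, a⁆ = 0

/-- The gauge action `x 𝒢 a = e^{ad_x}(a) - ((e^{ad_x}-1)/ad_x)(dx)`. -/
def gauge (x a : C.L) : C.L := C.expAd x a - C.expAdInt x (C.d x)

end CFL

/-!
Since `exp ∘ ι` is injective and turns `bch` into the product of `A`, the BCH product makes `L`
a group with unit `0` and inverse `a ↦ -a`, in which `t ↦ t • a` is a homomorphism from `(ℚ, +)`.
In particular `a ^ n = n • a`, so the group is torsion free, and two homomorphisms from `ℚ` into a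
torsion-free group that agree at `1` agree everywhere. Hence conjugation commutes with rational
multiples, `g * (t • a) * g⁻¹ = t • (g * a * g⁻¹)`. Both identities follow, because conjugation
by `x` carries `y * x` to `x * y`.
-/

open Multiplicative

theorem MonoidHom.ext_multiplicative_rat {G : Type*} [Group G] [IsMulTorsionFree G]
    {f g : Multiplicative ℚ →* G} (h : f (ofAdd 1) = g (ofAdd 1)) : f = g := by
  refine MonoidHom.ext fun t ↦ IsMulTorsionFree.pow_left_injective (toAdd t).den_ne_zero ?_
  have hden : t ^ (toAdd t).den = ofAdd 1 ^ (toAdd t).num := by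
    apply toAdd.injective
    rw [toAdd_pow, toAdd_zpow, toAdd_ofAdd, nsmul_eq_mul, zsmul_one, mul_comm,
      Rat.mul_den_eq_num]
  simp only [← map_pow, hden, map_zpow, h]

namespace CFL

section BCHProduct

variable (C : CFL)

theorem exp_neg_mul_exp (a : C.L) : C.exp (C.ι (-a)) * C.exp (C.ι a) = 1 := by
  have h := C.exp_add_smul a (-1) 1
  rwa [neg_add_cancel, zero_smul, map_zero, C.exp_zero, neg_one_smul, one_smul, eq_comm] at h

theorem bch_assoc (a b c : C.L) : C.bch (C.bch a b) c = C.bch a (C.bch b c) :=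
  C.exp_inj _ _ <| by simp only [C.exp_bch, mul_assoc]

theorem zero_bch (a : C.L) : C.bch 0 a = a :=
  C.exp_inj _ _ <| by rw [C.exp_bch, map_zero, C.exp_zero, one_mul]

theorem neg_bch_self (a : C.L) : C.bch (-a) a = 0 :=
  C.exp_inj _ _ <| by rw [C.exp_bch, C.exp_neg_mul_exp, map_zero, C.exp_zero]

theorem bch_smul_smul (r s : ℚ) (a : C.L) : C.bch (r • a) (s • a) = (r + s) • a :=
  C.exp_inj _ _ <| by rw [C.exp_bch, C.exp_add_smul]

end BCHProduct

def BCHGroup (C : CFL) : Type := C.L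

def toBCHGroup {C : CFL} : C.L ≃ C.BCHGroup := Equiv.refl _

section BCHGroup

variable {C : CFL}

instance : One C.BCHGroup := ⟨toBCHGroup 0⟩

instance : Mul C.BCHGroup :=
  ⟨fun a b ↦ toBCHGroup (C.bch (toBCHGroup.symm a) (toBCHGroup.symm b))⟩

instance : Inv C.BCHGroup := ⟨fun a ↦ toBCHGroup (-toBCHGroup.symm a)⟩

instance : Group C.BCHGroup :=
  Group.ofLeftAxioms (fun _ _ _ ↦ C.bch_assoc _ _ _) (fun _ ↦ C.zero_bch _)
    (fun _ ↦ C.neg_bch_self _)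

theorem toBCHGroup_bch (a b : C.L) : toBCHGroup (C.bch a b) = toBCHGroup a * toBCHGroup b := rfl

theorem toBCHGroup_neg (a : C.L) : toBCHGroup (-a) = (toBCHGroup a)⁻¹ := rfl

variable (C) in
def oneParam (a : C.BCHGroup) : Multiplicative ℚ →* C.BCHGroup where
  toFun t := toBCHGroup (toAdd t • toBCHGroup.symm a)
  map_one' := congrArg toBCHGroup (zero_smul ℚ _)
  map_mul' s t := congrArg toBCHGroup (C.bch_smul_smul (toAdd s) (toAdd t) _).symm

theorem toBCHGroup_smul (r : ℚ) (a : C.L) :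
    toBCHGroup (r • a) = C.oneParam (toBCHGroup a) (ofAdd r) := rfl

theorem oneParam_ofAdd_one (a : C.BCHGroup) : C.oneParam a (ofAdd 1) = a :=
  congrArg toBCHGroup (one_smul ℚ _)

theorem pow_eq_oneParam (a : C.BCHGroup) (n : ℕ) : a ^ n = C.oneParam a (ofAdd n) := by
  rw [← nsmul_one, ofAdd_nsmul, map_pow, oneParam_ofAdd_one]

instance : IsMulTorsionFree C.BCHGroup where
  pow_left_injective n hn a b hab := by
    simp only [pow_eq_oneParam] at hab
    have hsmul : (n : ℚ) • toBCHGroup.symm a = (n : ℚ) • toBCHGroup.symm b := hab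
    exact toBCHGroup.symm.injective (smul_right_injective C.L (Nat.cast_ne_zero.2 hn) hsmul)

theorem oneParam_conj (g a : C.BCHGroup) :
    C.oneParam (g * a * g⁻¹) = (MulAut.conj g).toMonoidHom.comp (C.oneParam a) :=
  MonoidHom.ext_multiplicative_rat <| by
    simp only [oneParam_ofAdd_one, MonoidHom.comp_apply, MulEquiv.coe_toMonoidHom,
      MulAut.conj_apply]

theorem mul_oneParam (g a : C.BCHGroup) (t : Multiplicative ℚ) :
    g * C.oneParam a t = C.oneParam (g * a * g⁻¹) t * g := by
  rw [oneParam_conj, MonoidHom.comp_apply, MulEquiv.coe_toMonoidHom, MulAut.conj_apply,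
    inv_mul_cancel_right]

end BCHGroup

end CFL

open CFL in
theorem bch_smul_shift_general (C : CFL) (x y : C.L) (r : ℚ) :
    C.bch (r • C.bch x y) x = C.bch x (r • C.bch y x) ∧
    C.bch (r • C.bch y x) (-x) = C.bch (-x) (r • C.bch x y) := by
  simp only [← toBCHGroup.apply_eq_iff_eq, toBCHGroup_bch, toBCHGroup_neg, toBCHGroup_smul]
  constructor
  · have h := mul_oneParam (toBCHGroup x) (toBCHGroup y * toBCHGroup x) (ofAdd r)
    rw [← mul_assoc, mul_inv_cancel_right] at h
    exact h.symm
  · have h := mul_oneParam (toBCHGroup x)⁻¹ (toBCHGroup x * toBCHGroup y) (ofAdd r)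
    rw [inv_mul_cancel_left, inv_inv] at h
    exact h.symm

/-- `r(x∗y) ∗ x = x ∗ r(y∗x)` and `r(y∗x) ∗ (-x) = (-x) ∗ r(x∗y)`. -/
theorem bch_smul_shift (C : CFL) (x y : C.L) (hx : x ∈ C.deg 0) (hy : y ∈ C.deg 0) (r : ℚ) :
    C.bch (r • C.bch x y) x = C.bch x (r • C.bch y x) ∧
    C.bch (r • C.bch y x) (-x) = C.bch (-x) (r • C.bch x y) :=
  bch_smul_shift_general C x y r
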